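/- arXiv:2207.13199 — 3 statements merged into one kernel-verified Lean document; each statement's English description precedes it below -/
import Mathlib

section
/- Let p be an odd prime and V a finite-dimensional vector space over F_p with a linear automorphism τ satisfying τ^p = 1. If the fixed subspace V^τ has codimension at most p−2 in V, then 1 + τ + τ^2 + ⋯ + τ^{p−1} = 0 as a linear map on V. -/
open Polynomial Finset Module

theorem stmt_2 (p : ℕ) [Fact p.Prime] (hodd : Odd p)
    (V : Type) [AddCommGroup V] [Module (ZMod p) V] [FiniteDimensional (ZMod p) V]
    (τ : Module.End (ZMod p) V) (hτ : τ ^ p = 1)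
    (hcodim :
      Module.finrank (ZMod p) V - Module.finrank (ZMod p) (LinearMap.ker (τ - 1)) ≤ p - 2) :
    ∑ i ∈ Finset.range p, τ ^ i = 0 := by
  have hp : p.Prime := Fact.out
  have hp3 : 3 ≤ p := by
    rcases hodd with ⟨k, rfl⟩
    have := hp.two_le
    omega
  set N : Module.End (ZMod p) V := τ - 1 with hNdef
  have hXsub : ((X : (ZMod p)[X]) - 1) ^ p = X ^ p - 1 := by
    simpa using sub_pow_char_of_commute p (Commute.one_right (X : (ZMod p)[X]))
  have hne : (X : (ZMod p)[X]) - 1 ≠ 0 := by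
    simpa using X_sub_C_ne_zero (1 : ZMod p)
  have hgeom : (∑ i ∈ range p, (X : (ZMod p)[X]) ^ i) = (X - 1) ^ (p - 1) := by
    have h1 : (∑ i ∈ range p, (X : (ZMod p)[X]) ^ i) * (X - 1) = X ^ p - 1 :=
      geom_sum_mul X p
    have h2 : ((X : (ZMod p)[X]) - 1) ^ (p - 1) * (X - 1) = X ^ p - 1 := by
      rw [← pow_succ, Nat.sub_add_cancel (by omega)]
      exact hXsub
    exact mul_right_cancel₀ hne (h1.trans h2.symm)
  have hNp : N ^ p = 0 := by
    have h := congrArg (aeval τ) hXsub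
    simp only [map_pow, map_sub, aeval_X, map_one] at h
    rw [hNdef, h, hτ, sub_self]
  have hsum : ∑ i ∈ Finset.range p, τ ^ i = N ^ (p - 1) := by
    have h := congrArg (aeval τ) hgeom
    simpa only [map_sum, map_pow, map_sub, aeval_X, map_one] using h
  rw [hsum]
  by_contra hne0
  -- ranges decrease
  have hrle : ∀ k : ℕ, LinearMap.range (N ^ (k + 1)) ≤ LinearMap.range (N ^ k) := by
    intro k
    rw [pow_succ]
    rintro x ⟨y, rfl⟩
    exact ⟨N y, rfl⟩
  have hstab : ∀ k : ℕ, LinearMap.range (N ^ (k + 1)) = LinearMap.range (N ^ k) →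
      ∀ m : ℕ, LinearMap.range (N ^ (k + m)) = LinearMap.range (N ^ k) := by
    intro k hk m
    induction m with
    | zero => rfl
    | succ m ih =>
      have e1 : N ^ (k + m + 1) = N ∘ₗ N ^ (k + m) := by
        rw [← Module.End.mul_eq_comp, ← pow_succ']
      have e2 : N ^ (k + 1) = N ∘ₗ N ^ k := by
        rw [← Module.End.mul_eq_comp, ← pow_succ']
      calc LinearMap.range (N ^ (k + m + 1))
          = Submodule.map N (LinearMap.range (N ^ (k + m))) := by
            rw [e1, LinearMap.range_comp]
        _ = Submodule.map N (LinearMap.range (N ^ k)) := by rw [ih]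
        _ = LinearMap.range (N ^ (k + 1)) := by rw [e2, LinearMap.range_comp]
        _ = LinearMap.range (N ^ k) := hk
  have hstrict : ∀ k : ℕ, N ^ (k + 1) ≠ 0 →
      finrank (ZMod p) (LinearMap.range (N ^ (k + 1))) <
        finrank (ZMod p) (LinearMap.range (N ^ k)) := by
    intro k hk
    rcases lt_or_ge (finrank (ZMod p) (LinearMap.range (N ^ (k + 1))))
        (finrank (ZMod p) (LinearMap.range (N ^ k))) with h | h
    · exact h
    exfalso
    have heq : LinearMap.range (N ^ (k + 1)) = LinearMap.range (N ^ k) :=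
      Submodule.eq_of_le_of_finrank_le (hrle k) h
    have h0 : LinearMap.range (N ^ (k + p)) = LinearMap.range (N ^ k) := hstab k heq p
    have hz : N ^ (k + p) = 0 := by rw [pow_add, hNp, mul_zero]
    have : LinearMap.range (N ^ k) = ⊥ := by
      rw [← h0, hz, LinearMap.range_zero]
    have : N ^ (k + 1) = 0 := by
      rw [← LinearMap.range_eq_bot]
      exact le_bot_iff.mp (this ▸ hrle k)
    exact hk this
  have hnz : ∀ j : ℕ, j ≤ p - 1 → N ^ (p - 1 - j) ≠ 0 := by
    intro j hj h0
    apply hne0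
    have : N ^ (p - 1) = N ^ (p - 1 - j) * N ^ j := by
      rw [← pow_add, Nat.sub_add_cancel hj]
    rw [this, h0, zero_mul]
  have hchain : ∀ j : ℕ, j ≤ p - 2 →
      j + 1 ≤ finrank (ZMod p) (LinearMap.range (N ^ (p - 1 - j))) := by
    intro j
    induction j with
    | zero =>
      intro _
      by_contra h
      have h0 : finrank (ZMod p) (LinearMap.range (N ^ (p - 1 - 0))) = 0 := by omega
      have : LinearMap.range (N ^ (p - 1 - 0)) = ⊥ := Submodule.finrank_eq_zero.mp h0
      exact hnz 0 (by omega) (LinearMap.range_eq_bot.mp this)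
    | succ j ih =>
      intro hj
      have hih := ih (by omega)
      have e : p - 1 - j = (p - 1 - (j + 1)) + 1 := by omega
      have hnz' : N ^ ((p - 1 - (j + 1)) + 1) ≠ 0 := by
        rw [← e]; exact hnz j (by omega)
      have := hstrict (p - 1 - (j + 1)) hnz'
      rw [← e] at this
      omega
  have hlast := hchain (p - 2) (le_refl _)
  have e1 : p - 1 - (p - 2) = 1 := by omega
  rw [e1, pow_one] at hlast
  have hrk : finrank (ZMod p) (LinearMap.range N) + finrank (ZMod p) (LinearMap.ker N) =
      finrank (ZMod p) V := LinearMap.finrank_range_add_finrank_ker N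
  have hker_le : finrank (ZMod p) (LinearMap.ker N) ≤ finrank (ZMod p) V :=
    Submodule.finrank_le _
  have hkeq : finrank (ZMod p) (LinearMap.ker N) = finrank (ZMod p) (LinearMap.ker (τ - 1)) := by
    rw [hNdef]
  omega
end

section
/- Let G be a finite abelian p-group and n ≥ 0. The number of elements of G of order exactly p^n equals the number of group homomorphisms G → Q/Z whose image has size p^n, which also equals the number of surjective homomorphisms G → Z/p^n Z. -/
open AddSubgroup

local notation "Q" => ℚ ⧸ AddSubgroup.zmultiples (1 : ℚ)

noncomputable def uu (N : ℕ) : Q := ((N : ℚ)⁻¹ : ℚ)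

lemma smul_mk (k : ℤ) (q : ℚ) : k • (↑q : Q) = ↑(k • q) := rfl
lemma nsmul_mk (k : ℕ) (q : ℚ) : k • (↑q : Q) = ↑(k • q) := rfl

lemma mk_eq_zero {q : ℚ} : (↑q : Q) = 0 ↔ ∃ k : ℤ, (k : ℚ) = q := by
  rw [QuotientAddGroup.eq_zero_iff]
  simp [AddSubgroup.mem_zmultiples_iff, zsmul_eq_mul]

lemma uu_nsmul_eq_zero_iff {N : ℕ} (hN : N ≠ 0) (d : ℕ) : d • uu N = 0 ↔ N ∣ d := by
  have hN' : (N : ℚ) ≠ 0 := Nat.cast_ne_zero.mpr hN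
  rw [uu, nsmul_mk, mk_eq_zero]
  constructor
  · rintro ⟨k, hk⟩
    have : (d : ℚ) = k * N := by
      simp only [nsmul_eq_mul] at hk
      field_simp at hk
      push_cast
      linarith [hk]
    have h2 : (d : ℤ) = k * N := by exact_mod_cast this
    have : (N : ℤ) ∣ (d : ℤ) := ⟨k, by linarith⟩
    exact_mod_cast this
  · rintro ⟨c, rfl⟩
    exact ⟨c, by push_cast; simp only [nsmul_eq_mul]; field_simp; push_cast; ring⟩

lemma addOrderOf_uu {N : ℕ} (hN : N ≠ 0) : addOrderOf (uu N) = N := by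
  have h1 : addOrderOf (uu N) ∣ N :=
    addOrderOf_dvd_of_nsmul_eq_zero ((uu_nsmul_eq_zero_iff hN N).mpr dvd_rfl)
  have h2 : N ∣ addOrderOf (uu N) := by
    rcases Nat.eq_zero_or_pos (addOrderOf (uu N)) with h | h
    · exact h ▸ dvd_zero N
    · exact (uu_nsmul_eq_zero_iff hN _).mp (addOrderOf_nsmul_eq_zero (uu N))
  exact Nat.dvd_antisymm h1 h2

lemma mem_zmultiples_uu {N : ℕ} (hN : N ≠ 0) {x : Q} (hx : N • x = 0) :
    x ∈ zmultiples (uu N) := by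
  obtain ⟨q, rfl⟩ := QuotientAddGroup.mk_surjective x
  rw [nsmul_mk, mk_eq_zero] at hx
  obtain ⟨k, hk⟩ := hx
  refine mem_zmultiples_iff.mpr ⟨k, ?_⟩
  rw [uu, smul_mk]
  congr 1
  have hN' : (N : ℚ) ≠ 0 := Nat.cast_ne_zero.mpr hN
  simp only [zsmul_eq_mul, nsmul_eq_mul] at *
  field_simp
  linarith [hk]

lemma zmod_intCast_val {N : ℕ} [NeZero N] (x : ZMod N) : ((x.val : ℤ) : ZMod N) = x := by
  push_cast
  rw [ZMod.natCast_val, ZMod.cast_id]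

noncomputable def chi (N : ℕ) [NeZero N] : ZMod N →+ Q :=
  ZMod.lift N ⟨zmultiplesHom _ (uu N), by
    simp only [zmultiplesHom_apply, natCast_zsmul]
    exact (uu_nsmul_eq_zero_iff (NeZero.ne N) N).mpr dvd_rfl⟩

lemma chi_intCast (N : ℕ) [NeZero N] (k : ℤ) : chi N ((k : ZMod N)) = k • uu N :=
  ZMod.lift_coe _ _ _

lemma chi_one (N : ℕ) [NeZero N] : chi N 1 = uu N := by
  have := chi_intCast N 1
  simpa using this

lemma zmod_hom_ext {N : ℕ} [NeZero N] {M : Type*} [AddCommGroup M]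
    {f g : ZMod N →+ M} (h : f 1 = g 1) : f = g := by
  ext x
  have hx : x = x.val • (1 : ZMod N) := by
    rw [nsmul_eq_mul, mul_one, ZMod.natCast_val, ZMod.cast_id]
  rw [hx, map_nsmul, map_nsmul, h]

lemma chi_injective (N : ℕ) [NeZero N] : Function.Injective (chi N) := by
  rw [injective_iff_map_eq_zero]
  intro x hx
  rw [← zmod_intCast_val x, chi_intCast, natCast_zsmul,
    uu_nsmul_eq_zero_iff (NeZero.ne N)] at hx
  rw [← zmod_intCast_val x]
  push_cast
  exact (ZMod.natCast_eq_zero_iff x.val N).mpr hx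

lemma nsmul_hom_zmod {N : ℕ} [NeZero N] (f : ZMod N →+ Q) : N • f = 0 := by
  ext x
  show N • f x = 0
  rw [← map_nsmul]
  have : (N : ℕ) • x = 0 := by
    rw [nsmul_eq_mul, ZMod.natCast_self, zero_mul]
  rw [this, map_zero]

noncomputable def Phi (N : ℕ) [NeZero N] : ZMod N →+ (ZMod N →+ Q) :=
  ZMod.lift N ⟨zmultiplesHom _ (chi N), by
    simp only [zmultiplesHom_apply, natCast_zsmul]
    exact nsmul_hom_zmod (chi N)⟩

lemma Phi_intCast (N : ℕ) [NeZero N] (k : ℤ) : Phi N ((k : ZMod N)) = k • chi N :=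
  ZMod.lift_coe _ _ _

lemma Phi_bijective (N : ℕ) [NeZero N] : Function.Bijective (Phi N) := by
  constructor
  · rw [injective_iff_map_eq_zero]
    intro x hx
    rw [← zmod_intCast_val x, Phi_intCast] at hx
    have h1 : ((x.val : ℤ) • chi N) 1 = 0 := by rw [hx]; rfl
    have h2 : (x.val : ℕ) • uu N = 0 := by
      rw [← natCast_zsmul]
      rw [← chi_one N]
      exact h1
    rw [uu_nsmul_eq_zero_iff (NeZero.ne N)] at h2
    rw [← zmod_intCast_val x]
    push_cast
    exact (ZMod.natCast_eq_zero_iff x.val N).mpr h2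
  · intro f
    have hf : (N : ℕ) • f 1 = 0 := by
      rw [← map_nsmul]
      have : (N : ℕ) • (1 : ZMod N) = 0 := by
        rw [nsmul_eq_mul, ZMod.natCast_self, zero_mul]
      rw [this, map_zero]
    obtain ⟨k, hk⟩ := mem_zmultiples_iff.mp (mem_zmultiples_uu (NeZero.ne N) hf)
    refine ⟨(k : ZMod N), zmod_hom_ext ?_⟩
    rw [Phi_intCast]
    show k • chi N 1 = f 1
    rw [chi_one]
    exact hk

noncomputable def eDual (N : ℕ) [NeZero N] : (ZMod N →+ Q) ≃+ ZMod N :=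
  (AddEquiv.ofBijective (Phi N) (Phi_bijective N)).symm

noncomputable def piDFinsupp {ι : Type} [Fintype ι] [DecidableEq ι] (β : ι → Type*)
    [∀ i, AddCommGroup (β i)] : (Π₀ i, β i) ≃+ (∀ i, β i) :=
  { DFinsupp.equivFunOnFintype with map_add' := fun f g => rfl }

lemma duality (A : Type) [AddCommGroup A] [Finite A] :
    Nonempty ((A →+ Q) ≃+ A) := by
  classical
  obtain ⟨ι, hι, nn, hnn, ⟨e1⟩⟩ := AddCommGroup.equiv_directSum_zmod_of_finite' A
  have : ∀ i, NeZero (nn i) := fun i => ⟨by have := hnn i; omega⟩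
  refine ⟨(AddEquiv.addMonoidHomCongrLeft (N := Q) e1).trans <|
    (DFinsupp.liftAddHom.symm).trans <|
    (AddEquiv.piCongrRight fun i => eDual (nn i)).trans <|
    (piDFinsupp _).symm.trans e1.symm⟩

section RangeCard
variable {A : Type} [AddCommGroup A] [Finite A]

instance (f : A →+ Q) : Finite f.range :=
  Finite.of_surjective f.rangeRestrict f.rangeRestrict_surjective

lemma addOrderOf_hom_pos (f : A →+ Q) : addOrderOf f ≠ 0 := by
  have h : Nat.card A • f = 0 := by
    ext a
    show Nat.card A • f a = 0
    rw [← map_nsmul, addOrderOf_dvd_iff_nsmul_eq_zero.mp (addOrderOf_dvd_natCard a), map_zero]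
  have hd : addOrderOf f ∣ Nat.card A := addOrderOf_dvd_of_nsmul_eq_zero h
  have : Nat.card A ≠ 0 := Nat.card_pos.ne'
  exact fun h0 => this (by simpa [h0] using hd)

lemma card_range_eq_addOrderOf (f : A →+ Q) : Nat.card f.range = addOrderOf f := by
  set d := addOrderOf f with hd
  have hd0 : d ≠ 0 := addOrderOf_hom_pos f
  set m := Nat.card f.range with hm
  have hm0 : m ≠ 0 := Nat.card_pos.ne'
  -- range ≤ zmultiples (uu d)
  have hle : f.range ≤ zmultiples (uu d) := by
    rintro x ⟨a, rfl⟩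
    refine mem_zmultiples_uu hd0 ?_
    have : (d • f) a = 0 := by rw [addOrderOf_nsmul_eq_zero f]; rfl
    simpa using this
  have h1 : m ∣ d := by
    have := AddSubgroup.card_dvd_of_le hle
    rwa [Nat.card_zmultiples, addOrderOf_uu hd0] at this
  have h2 : d ∣ m := by
    refine addOrderOf_dvd_of_nsmul_eq_zero ?_
    ext a
    show m • f a = 0
    have := AddSubgroup.addOrderOf_dvd_natCard f.range (AddMonoidHom.mem_range.mpr ⟨a, rfl⟩)
    exact addOrderOf_dvd_iff_nsmul_eq_zero.mp this
  exact Nat.dvd_antisymm h1 h2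

end RangeCard

section Part2
variable (N : ℕ) [NeZero N]

lemma chi_mem_T (x : ZMod N) : chi N x ∈ zmultiples (uu N) := by
  rw [← zmod_intCast_val x, chi_intCast]
  exact mem_zmultiples_iff.mpr ⟨(x.val : ℤ), rfl⟩

noncomputable def chiT : ZMod N →+ zmultiples (uu N) :=
  (chi N).codRestrict _ (chi_mem_T N)

lemma chiT_bijective : Function.Bijective (chiT N) := by
  constructor
  · intro x y h
    exact chi_injective N (congrArg Subtype.val h)
  · rintro ⟨t, ht⟩
    obtain ⟨k, hk⟩ := mem_zmultiples_iff.mp ht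
    refine ⟨(k : ZMod N), Subtype.ext ?_⟩
    show chi N ((k : ZMod N)) = t
    rw [chi_intCast]; exact hk

noncomputable def eT : ZMod N ≃+ zmultiples (uu N) :=
  AddEquiv.ofBijective (chiT N) (chiT_bijective N)

lemma card_T : Nat.card (zmultiples (uu N)) = N := by
  rw [Nat.card_zmultiples, addOrderOf_uu (NeZero.ne N)]

variable {A : Type} [AddCommGroup A] [Finite A]

lemma range_le_T {f : A →+ Q} (hf : Nat.card f.range = N) : f.range ≤ zmultiples (uu N) := by
  rintro x hx
  refine mem_zmultiples_uu (NeZero.ne N) ?_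
  have := AddSubgroup.addOrderOf_dvd_natCard f.range hx
  rw [hf] at this
  exact addOrderOf_dvd_iff_nsmul_eq_zero.mp this

noncomputable def part2Equiv :
    {f : A →+ Q // Nat.card f.range = N} ≃ {g : A →+ ZMod N // Function.Surjective g} where
  toFun f :=
    ⟨(eT N).symm.toAddMonoidHom.comp ((f : A →+ Q).codRestrict _ (fun a => range_le_T N f.2
        (AddMonoidHom.mem_range.mpr ⟨a, rfl⟩))), by
      have hr : (f : A →+ Q).range = zmultiples (uu N) := by
        haveI : Finite (zmultiples (uu N)) :=
          Nat.finite_of_card_ne_zero (by rw [card_T]; exact NeZero.ne N)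
        refine AddSubgroup.eq_of_le_of_card_ge (range_le_T N f.2) ?_
        rw [card_T, f.2]
      have hsurj : Function.Surjective ((f : A →+ Q).codRestrict (zmultiples (uu N))
          (fun a => range_le_T N f.2 (AddMonoidHom.mem_range.mpr ⟨a, rfl⟩))) := by
        rintro ⟨t, ht⟩
        rw [← hr] at ht
        obtain ⟨a, ha⟩ := AddMonoidHom.mem_range.mp ht
        exact ⟨a, Subtype.ext ha⟩
      exact (eT N).symm.surjective.comp hsurj⟩
  invFun g :=
    ⟨(chi N).comp g, by
      have h1 : (((chi N).comp (g : A →+ ZMod N)).range : Set Q) = Set.range (chi N) := by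
        rw [AddMonoidHom.coe_range, AddMonoidHom.coe_comp, Set.range_comp,
          g.2.range_eq, Set.image_univ]
      have : Nat.card ((chi N).comp (g : A →+ ZMod N)).range = Nat.card (Set.range (chi N)) := by
        rw [← h1]; rfl
      rw [this, Nat.card_range_of_injective (chi_injective N), Nat.card_zmod]⟩
  left_inv f := by
    ext a
    show chi N ((eT N).symm (((f : A →+ Q).codRestrict _ _) a)) = f.1 a
    have : ∀ t : zmultiples (uu N), chi N ((eT N).symm t) = t.val := fun t => by
      conv_rhs => rw [← (eT N).apply_symm_apply t]
      rfl
    rw [this]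
    rfl
  right_inv g := by
    ext a
    show (eT N).symm _ = g.1 a
    rw [AddEquiv.symm_apply_eq]
    exact Subtype.ext rfl

end Part2

theorem stmt_4 (p : ℕ) (hp : p.Prime) (n : ℕ)
    (A : Type) [AddCommGroup A] [Finite A] (hA : ∃ m, Nat.card A = p ^ m) :
    Nat.card {a : A // addOrderOf a = p ^ n} =
        Nat.card {f : A →+ ℚ ⧸ AddSubgroup.zmultiples (1 : ℚ) // Nat.card f.range = p ^ n} ∧
      Nat.card {f : A →+ ℚ ⧸ AddSubgroup.zmultiples (1 : ℚ) // Nat.card f.range = p ^ n} =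
        Nat.card {f : A →+ ZMod (p ^ n) // Function.Surjective f} := by
  haveI : NeZero (p ^ n) := ⟨pow_ne_zero n hp.pos.ne'⟩
  obtain ⟨e⟩ := duality A
  constructor
  · have e1 : {f : A →+ ℚ ⧸ AddSubgroup.zmultiples (1 : ℚ) // addOrderOf f = p ^ n} ≃
        {a : A // addOrderOf a = p ^ n} :=
      e.toEquiv.subtypeEquiv fun f => by rw [show e.toEquiv f = e f from rfl, e.addOrderOf_eq]
    have e2 : {f : A →+ ℚ ⧸ AddSubgroup.zmultiples (1 : ℚ) // addOrderOf f = p ^ n} ≃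
        {f : A →+ ℚ ⧸ AddSubgroup.zmultiples (1 : ℚ) // Nat.card f.range = p ^ n} :=
      Equiv.subtypeEquivRight fun f => by rw [card_range_eq_addOrderOf]
    exact Nat.card_congr (e1.symm.trans e2)
  · exact Nat.card_congr (part2Equiv (p ^ n))
end

section
/- Let P be a finite p-group (p prime) and H a nontrivial normal subgroup of P such that the quotient P/H is cyclic. Then there exists a subgroup N of H of index p in H that is normal in P and such that P/N is abelian. -/
open scoped commutatorElement

/-- A nilpotent group whose abelianization is cyclic is abelian. -/
lemma aux_commutator_eq_bot {G : Type} [Group G] [Group.IsNilpotent G]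
    (hc : IsCyclic (G ⧸ (⁅(⊤ : Subgroup G), ⊤⁆ : Subgroup G))) :
    (⁅(⊤ : Subgroup G), ⊤⁆ : Subgroup G) = ⊥ := by
  set K : Subgroup G := ⁅(⊤ : Subgroup G), ⊤⁆ with hK
  set M : Subgroup G := ⁅K, (⊤ : Subgroup G)⁆ with hM
  have hMK : M ≤ K := Subgroup.commutator_le_left K ⊤
  -- the map G⧸M → G⧸K
  let f : (G ⧸ M) →* (G ⧸ K) :=
    QuotientGroup.map M K (MonoidHom.id G) (by simpa using hMK)
  have hker : f.ker ≤ Subgroup.center (G ⧸ M) := by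
    intro x hx
    induction x using QuotientGroup.induction_on with
    | H g =>
      have hgK : g ∈ K := by
        rw [MonoidHom.mem_ker] at hx
        have : ((g : G ⧸ K)) = 1 := hx
        exact (QuotientGroup.eq_one_iff g).mp this
      rw [Subgroup.mem_center_iff]
      intro y
      induction y using QuotientGroup.induction_on with
      | H a =>
        show ((a * g : G) : G ⧸ M) = ((g * a : G) : G ⧸ M)
        rw [QuotientGroup.eq]
        have : (a * g)⁻¹ * (g * a) = ⁅g⁻¹, a⁻¹⁆ := by
          simp [commutatorElement_def]; group
        rw [this]
        exact Subgroup.commutator_mem_commutator (K.inv_mem hgK) (Subgroup.mem_top _)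
  have hcomm : ∀ a b : G ⧸ M, a * b = b * a :=
    commutative_of_cyclic_center_quotient f hker
  have hKM : K ≤ M := by
    rw [hK, Subgroup.commutator_le]
    intro g₁ _ g₂ _
    rw [← QuotientGroup.eq_one_iff (N := M)]
    have h2 : ((⁅g₁, g₂⁆ : G) : G ⧸ M) = ⁅(g₁ : G ⧸ M), (g₂ : G ⧸ M)⁆ := rfl
    rw [h2, commutatorElement_eq_one_iff_commute]
    exact hcomm _ _
  -- K is contained in every term of the lower central series
  have hlcs : ∀ n, K ≤ Subgroup.lowerCentralSeries (⊤ : Subgroup G) n := by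
    intro n
    induction n with
    | zero => exact le_top
    | succ n ih =>
      calc K ≤ M := hKM
        _ ≤ ⁅Subgroup.lowerCentralSeries (⊤ : Subgroup G) n, ⊤⁆ := Subgroup.commutator_mono ih le_rfl
        _ = Subgroup.lowerCentralSeries (⊤ : Subgroup G) (n + 1) := (Subgroup.lowerCentralSeries_succ ⊤ n).symm
  obtain ⟨n, hn⟩ := Subgroup.nilpotent_iff_lowerCentralSeries.mp ‹Group.IsNilpotent G›
  exact le_bot_iff.mp (hn ▸ hlcs n)

theorem stmt_13 (p : ℕ) (hp : p.Prime)
    (P : Type) [Group P] [Finite P] (hP : IsPGroup p P)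
    (H : Subgroup P) [H.Normal] (hH : H ≠ ⊥) (hcyc : IsCyclic (P ⧸ H)) :
    ∃ N : Subgroup P, N ≤ H ∧ N.Normal ∧ (N.subgroupOf H).index = p ∧
      -- `P ⧸ N` is abelian, i.e. the commutator subgroup of `P` is contained in `N`
      ⁅(⊤ : Subgroup P), (⊤ : Subgroup P)⁆ ≤ N := by
  haveI : Fact p.Prime := ⟨hp⟩
  set K : Subgroup P := ⁅(⊤ : Subgroup P), ⊤⁆ with hKdef
  -- K ≤ H since P⧸H is abelian (cyclic)
  have hKH : K ≤ H := by
    letI : CommGroup (P ⧸ H) := IsCyclic.commGroup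
    have := Abelianization.commutator_subset_ker (QuotientGroup.mk' H)
    rwa [QuotientGroup.ker_mk'] at this
  -- K ≠ H, else P⧸K is cyclic and then K = ⊥ = H, contradiction
  have hKne : K ≠ H := by
    intro hEq
    haveI : Group.IsNilpotent P := hP.isNilpotent
    have hcyc' : IsCyclic (P ⧸ K) :=
      isCyclic_of_surjective (QuotientGroup.quotientMulEquivOfEq hEq).symm
        (QuotientGroup.quotientMulEquivOfEq hEq).symm.surjective
    have : K = ⊥ := aux_commutator_eq_bot hcyc'
    exact hH (by rw [← hEq]; exact this)
  have hKlt : K < H := lt_of_le_of_ne hKH hKne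
  -- Work inside H: quotient by K' := K.subgroupOf H
  set K' : Subgroup H := K.subgroupOf H with hK'def
  haveI : K'.Normal := by
    have : K.Normal := inferInstance
    exact this.subgroupOf H
  have hK'ne : K' ≠ ⊤ := by
    intro h
    apply hKne
    refine le_antisymm hKH ?_
    intro x hx
    have : (⟨x, hx⟩ : H) ∈ K' := h ▸ Subgroup.mem_top _
    exact this
  haveI : Nontrivial (H ⧸ K') := by
    rcases SetLike.exists_of_lt (lt_top_iff_ne_top.mpr hK'ne : K' < ⊤) with ⟨x, _, hx⟩
    exact ⟨(x : H ⧸ K'), 1, by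
      intro h
      exact hx ((QuotientGroup.eq_one_iff x).mp h)⟩
  have hQp : IsPGroup p (H ⧸ K') := ((hP.to_subgroup H).to_quotient K')
  obtain ⟨m, hm0, hmcard⟩ := hQp.nontrivial_iff_card.mp ‹_›
  -- find a subgroup of H ⧸ K' of index p
  obtain ⟨S, hS⟩ := Sylow.exists_subgroup_card_pow_prime (G := H ⧸ K') p
    (n := m - 1) (by rw [hmcard]; exact pow_dvd_pow p (Nat.sub_le m 1))
  have hSindex : S.index = p := by
    have h1 : Nat.card S * S.index = Nat.card (H ⧸ K') := S.card_mul_index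
    rw [hS, hmcard] at h1
    have hm : m - 1 + 1 = m := Nat.succ_pred_eq_of_pos hm0
    have h2 : p ^ (m - 1) * p = p ^ m := by rw [← pow_succ, hm]
    have hppos : p ^ (m - 1) ≠ 0 := pow_ne_zero _ hp.pos.ne'
    exact Nat.eq_of_mul_eq_mul_left (Nat.pos_of_ne_zero hppos) (h1.trans h2.symm)
  -- pull back to subgroup N' of H
  set N' : Subgroup H := S.comap (QuotientGroup.mk' K') with hN'def
  have hK'N' : K' ≤ N' := by
    intro x hx
    show QuotientGroup.mk' K' x ∈ S
    have : QuotientGroup.mk' K' x = 1 := (QuotientGroup.eq_one_iff x).mpr hx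
    rw [this]; exact S.one_mem
  have hN'index : N'.index = p := by
    rw [hN'def, Subgroup.index_comap_of_surjective _ (QuotientGroup.mk'_surjective K')]
    exact hSindex
  -- the subgroup N of P
  refine ⟨N'.map H.subtype, ?_, ?_, ?_, ?_⟩
  · rintro _ ⟨x, _, rfl⟩; exact x.2
  · -- normal since it contains the commutator subgroup
    have hKN : K ≤ N'.map H.subtype := by
      intro x hx
      exact ⟨⟨x, hKH hx⟩, hK'N' hx, rfl⟩
    constructor
    intro n hn g
    have h1 : g * n * g⁻¹ = ⁅g, n⁆ * n := by group
    rw [h1]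
    exact Subgroup.mul_mem _
      (hKN (Subgroup.commutator_mem_commutator (Subgroup.mem_top g) (Subgroup.mem_top n))) hn
  · have : (N'.map H.subtype).subgroupOf H = N' :=
      Subgroup.comap_map_eq_self_of_injective H.subtype_injective N'
    rw [this, hN'index]
  · intro x hx
    exact ⟨⟨x, hKH hx⟩, hK'N' hx, rfl⟩
end
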